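/- Let A be a 3×3 real orthogonal matrix with det A = 1, let t : Fin 3 → ℝ, let c ∈ ZMod 8, and let x : ZMod 8 → (Fin 3 → ℝ). Define y by y i = A.mulVec (x (c - i)) + t. Then the torsion data sequence of y satisfies σ(y) i = σ(x) (c - 1 - i) for every i ∈ ZMod 8. (Hence a reversal of the vertex labeling, combined with any orientation-preserving rigid motion, acts on torsion angle sequences by reversing their order.) -/

import Mathlib

open Matrix

/-- The torsion data of a quadruple `(a, b, c, d)` of points in `ℝ³`. -/
def torsionData (a b c d : Fin 3 → ℝ) : ℝ × ℝ :=
  let e₁ := b - a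
  let e₂ := c - b
  let e₃ := d - c
  let m₁ := e₁ ⨯₃ e₂
  let m₂ := e₂ ⨯₃ e₃
  (m₁ ⬝ᵥ m₂, (m₁ ⨯₃ m₂) ⬝ᵥ e₂)

/-- The torsion data sequence of a map `x : ZMod 8 → (Fin 3 → ℝ)`. -/
def torsionSeq (x : ZMod 8 → Fin 3 → ℝ) (i : ZMod 8) : ℝ × ℝ :=
  torsionData (x (i - 1)) (x i) (x (i + 1)) (x (i + 2))

/-!
Both components of the torsion data are built from the edges by cross and dot products only.
A rotation commutes with both products and a translation does not change the edges. Reversing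
the quadruple negates the edges and swaps `e₁ ↔ e₃`, which sends `(m₁, m₂)` to `(-m₂, -m₁)`;
the dot product `m₁ ⬝ᵥ m₂` is symmetric, and `(m₁ ⨯₃ m₂) ⬝ᵥ e₂` picks up two sign changes.
-/

namespace Matrix

theorem mulVec_dotProduct_mulVec_of_orthogonal {n R : Type*} [Fintype n] [DecidableEq n]
    [CommSemiring R] {A : Matrix n n R} (hA : Aᵀ * A = 1) (u v : n → R) :
    (A *ᵥ u) ⬝ᵥ (A *ᵥ v) = u ⬝ᵥ v := by
  rw [dotProduct_mulVec, ← mulVec_transpose, mulVec_mulVec, hA, one_mulVec]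

variable {R : Type*} [CommRing R] (A : Matrix (Fin 3) (Fin 3) R)

theorem mulVec_cross_mulVec (u v : Fin 3 → R) :
    (A *ᵥ u) ⨯₃ (A *ᵥ v) = A.adjugateᵀ *ᵥ (u ⨯₃ v) := by
  ext i
  fin_cases i <;>
    simp [cross_apply, mulVec, dotProduct, Fin.sum_univ_three, adjugate_fin_three] <;> ring

variable {A}

theorem adjugate_eq_transpose_of_orthogonal (hA : Aᵀ * A = 1) (hdet : A.det = 1) :
    A.adjugate = Aᵀ := by
  calc A.adjugate = Aᵀ * A * A.adjugate := by rw [hA, Matrix.one_mul]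
    _ = Aᵀ := by rw [Matrix.mul_assoc, mul_adjugate, hdet, one_smul, Matrix.mul_one]

theorem mulVec_cross_mulVec_of_orthogonal (hA : Aᵀ * A = 1) (hdet : A.det = 1)
    (u v : Fin 3 → R) : (A *ᵥ u) ⨯₃ (A *ᵥ v) = A *ᵥ (u ⨯₃ v) := by
  rw [mulVec_cross_mulVec, adjugate_eq_transpose_of_orthogonal hA hdet, transpose_transpose]

end Matrix

theorem torsionData_affine {A : Matrix (Fin 3) (Fin 3) ℝ} (hA : Aᵀ * A = 1) (hdet : A.det = 1)
    (t a b c d : Fin 3 → ℝ) :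
    torsionData (A *ᵥ a + t) (A *ᵥ b + t) (A *ᵥ c + t) (A *ᵥ d + t) = torsionData a b c d := by
  have edge (u v : Fin 3 → ℝ) : A *ᵥ u + t - (A *ᵥ v + t) = A *ᵥ (u - v) := by
    rw [add_sub_add_right_eq_sub, mulVec_sub]
  simp only [torsionData, edge, mulVec_cross_mulVec_of_orthogonal hA hdet,
    mulVec_dotProduct_mulVec_of_orthogonal hA]

theorem torsionData_reverse (a b c d : Fin 3 → ℝ) :
    torsionData d c b a = torsionData a b c d := by
  have hm₂ : (c - d) ⨯₃ (b - c) = -((c - b) ⨯₃ (d - c)) := by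
    rw [← neg_sub d c, ← neg_sub c b, LinearMap.map_neg₂, map_neg, neg_neg, cross_anticomm]
  have hm₁ : (b - c) ⨯₃ (a - b) = -((b - a) ⨯₃ (c - b)) := by
    rw [← neg_sub c b, ← neg_sub b a, LinearMap.map_neg₂, map_neg, neg_neg, cross_anticomm]
  simp only [torsionData]
  rw [hm₂, hm₁, ← neg_sub c b]
  simp only [map_neg, LinearMap.neg_apply, neg_neg, dotProduct_neg, neg_dotProduct]
  rw [dotProduct_comm, ← neg_dotProduct, cross_anticomm]

theorem torsionSeq_of_reversal
    (A : Matrix (Fin 3) (Fin 3) ℝ) (hA : Aᵀ * A = 1) (hdet : A.det = 1)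
    (t : Fin 3 → ℝ) (c : ZMod 8) (x : ZMod 8 → Fin 3 → ℝ) :
    ∀ i : ZMod 8, torsionSeq (fun j => A.mulVec (x (c - j)) + t) i = torsionSeq x (c - 1 - i) := by
  intro i
  have h₁ : c - (i - 1) = c - 1 - i + 2 := by ring
  have h₂ : c - i = c - 1 - i + 1 := by ring
  have h₃ : c - (i + 1) = c - 1 - i := by ring
  have h₄ : c - (i + 2) = c - 1 - i - 1 := by ring
  rw [torsionSeq, torsionSeq, h₁, h₂, h₃, h₄, torsionData_affine hA hdet, torsionData_reverse]
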